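/- Let k ≥ 1, n₁,...,n_k ≥ 2, n = Σ n_i, and fix i with 1 ≤ i ≤ k. If 𝒢_i is the cycle C_{2^{n_i}}, then Σ_{j=1}^{2^{n_i−1}} θ(n, ξ_{n₁...n_k}^{-1}(ℬ_{ij})) = 2^{n−n_i}(3·2^{2n_i−3} − 2^{n_i−1}), where ℬ_{ij} = N_{2^{n₁}} × ⋯ × F_j^{n_i} × ⋯ × N_{2^{n_k}} with F_j^{n_i} = {j,...,j+2^{n_i−1}−1} in the i-th coordinate and the full set N_{2^{n_l}} = {1,...,2^{n_l}} in every other coordinate. -/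

import Mathlib

open Finset

/-- Number of coordinates in which two 0-1 vectors differ. -/
def diffCount {n : ℕ} (u v : Fin n → Bool) : ℕ :=
  (Finset.univ.filter fun i => u i ≠ v i).card

/-- Adjacency in the hypercube `Q_n`: differ in exactly one coordinate. -/
def cubeAdj {n : ℕ} (u v : Fin n → Bool) : Prop := diffCount u v = 1

instance {n : ℕ} (u v : Fin n → Bool) : Decidable (cubeAdj u v) :=
  inferInstanceAs (Decidable (diffCount u v = 1))

/-- `theta n S`: number of edges of `Q_n` with exactly one endpoint in `S`. -/
def theta (n : ℕ) (S : Finset (Fin n → Bool)) : ℕ :=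
  ((Finset.univ ×ˢ Finset.univ).filter fun p : (Fin n → Bool) × (Fin n → Bool) =>
    p.1 ∈ S ∧ p.2 ∉ S ∧ cubeAdj p.1 p.2).card

/-- The reflected Gray code map `ξ_n : {0,1}^n → {1,...,2^n}`. -/
def gray : (n : ℕ) → (Fin n → Bool) → ℕ
  | 0, _ => 1
  | n + 1, v =>
    if v 0 = false then gray n (fun i => v i.succ)
    else 2 ^ (n + 1) + 1 - gray n (fun i => v i.succ)

/-- Wirelength of an embedding `f` of `Q_n` into a host with distance `d`. -/
def wirelength {n : ℕ} {α : Type*} (d : α → α → ℕ) (f : (Fin n → Bool) → α) : ℕ :=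
  (∑ u : Fin n → Bool, ∑ v : Fin n → Bool, if cubeAdj u v then d (f u) (f v) else 0) / 2

/-- Cyclic distance on the cycle with `m` vertices labeled `1,...,m`. -/
def cycDist (m a b : ℕ) : ℕ := min (Nat.dist a b) (m - Nat.dist a b)

/-- The 2-order Gray code map. -/
def gray2 (n₁ n₂ : ℕ) (v : Fin (n₁ + n₂) → Bool) : ℕ × ℕ :=
  (gray n₁ fun i => v (Fin.castAdd n₂ i), gray n₂ fun i => v (Fin.natAdd n₁ i))
/-- Offset of the `i`-th block in the concatenation of blocks of sizes `n j`. -/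
def blockOffset {k : ℕ} (n : Fin k → ℕ) (i : Fin k) : ℕ :=
  ∑ j ∈ Finset.univ.filter (fun j => j < i), n j

lemma blockPos_lt {k : ℕ} (n : Fin k → ℕ) (i : Fin k) (t : Fin (n i)) :
    blockOffset n i + (t : ℕ) < ∑ j, n j := by
  have ht : (t : ℕ) < n i := t.isLt
  calc blockOffset n i + (t : ℕ) < blockOffset n i + n i := by omega
    _ = ∑ j ∈ insert i (Finset.univ.filter (fun j => j < i)), n j := by
        rw [Finset.sum_insert (by simp), Nat.add_comm]; rfl
    _ ≤ ∑ j, n j := Finset.sum_le_sum_of_subset (Finset.subset_univ _)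

/-- The position in `Fin (∑ j, n j)` of the `t`-th coordinate of the `i`-th block. -/
def blockPos {k : ℕ} (n : Fin k → ℕ) (i : Fin k) (t : Fin (n i)) : Fin (∑ j, n j) :=
  ⟨blockOffset n i + (t : ℕ), blockPos_lt n i t⟩

/-- The `i`-th block of a concatenated 0-1 vector. -/
def block {k : ℕ} (n : Fin k → ℕ) (v : Fin (∑ j, n j) → Bool) (i : Fin k) :
    Fin (n i) → Bool :=
  fun t => v (blockPos n i t)

/-- Splitting map realizing the identification `{0,1}^n ≅ ∏ {0,1}^{n_i}`. -/
def split {k : ℕ} (n : Fin k → ℕ) (v : Fin (∑ j, n j) → Bool) :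
    (i : Fin k) → Fin (n i) → Bool :=
  fun i => block n v i

/-- The `k`-order Gray code map `ξ_{n₁…n_k}`. -/
def grayK {k : ℕ} (n : Fin k → ℕ) (v : Fin (∑ j, n j) → Bool) : Fin k → ℕ :=
  fun i => gray (n i) (block n v i)

/-!
Summed over `j`, an edge `uv` of `Q_n` is counted once for every arc `F_j` that contains the
`i`-th Gray label `a` of `u` but not the label `b` of `v`. Adding the edge in the opposite
orientation, every half-cycle of `C_{2m}` (`m = 2^(n_i - 1)`) is some `F_j` or the complement of
one, so the two orientations together contribute the cyclic distance between `a` and `b`. Only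
edges inside the `i`-th block change `a`, and each edge of `Q_{n_i}` occurs `2^(n - n_i)` times.
Finally, the sum over ordered edges of `Q_p` of the cyclic distance between Gray labels is
`3 * 4^(p-1) - 2^p`, by recursion on `p`: the two halves of `Q_{p+1}` are copies of `Q_p` labelled
inside the two halves of the path `1, …, 2^(p+1)`, and the edges between them join `a` and
`2^(p+1) + 1 - a`.
-/

open Function

noncomputable def rangeComplSumEquiv {ι ι' : Type*} [DecidableEq ι] [Fintype ι']
    {p : ι' → ι} (hp : Injective p) : ι' ⊕ {j // j ∉ Set.range p} ≃ ι :=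
  (Equiv.sumCongr (Equiv.ofInjective p hp) (Equiv.refl _)).trans (Equiv.sumCompl _)

section HammingRestrict

variable {ι ι' β : Type*} [Fintype ι] [DecidableEq ι] [Fintype ι'] [DecidableEq β]
  {p : ι' → ι}

theorem hammingDist_eq_add_restrict_compl (hp : Injective p) (u v : ι → β) :
    hammingDist u v =
      hammingDist (u ∘ p) (v ∘ p) +
        hammingDist (fun j : {j // j ∉ Set.range p} => u j) (fun j => v j) := by
  simp only [hammingDist, card_filter]
  rw [← Fintype.sum_equiv (rangeComplSumEquiv hp)
    (fun s => if u (rangeComplSumEquiv hp s) ≠ v (rangeComplSumEquiv hp s) then 1 else 0) _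
    (fun _ => rfl), Fintype.sum_sum_type]
  rfl

theorem sum_hammingDist_eq_one_restrict [DecidableEq ι'] [Fintype β] (hp : Injective p)
    (F : (ι' → β) → (ι' → β) → ℕ) (hF : ∀ x, F x x = 0) :
    (∑ u : ι → β, ∑ v, if hammingDist u v = 1 then F (u ∘ p) (v ∘ p) else 0) =
      Fintype.card β ^ (Fintype.card ι - Fintype.card ι') *
        ∑ x : ι' → β, ∑ y : ι' → β, if hammingDist x y = 1 then F x y else 0 := by
  let C := {j // j ∉ Set.range p}
  let e : (ι → β) ≃ (ι' → β) × (C → β) :=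
    (Equiv.arrowCongr (rangeComplSumEquiv hp) (Equiv.refl β)).symm.trans
      (Equiv.sumArrowEquivProdArrow _ _ _)
  have hcollapse : ∀ (x y : ι' → β) (z w : C → β),
      (if hammingDist x y + hammingDist z w = 1 then F x y else 0) =
        if z = w then (if hammingDist x y = 1 then F x y else 0) else 0 := by
    intro x y z w
    by_cases hzw : z = w
    · simp [hzw]
    by_cases hxy : x = y
    · simp [hxy, hF]
    have := hammingDist_ne_zero.2 hzw
    have := hammingDist_ne_zero.2 hxy
    rw [if_neg hzw, if_neg (by omega)]
  have hcard : Fintype.card C = Fintype.card ι - Fintype.card ι' := by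
    rw [Fintype.card_subtype_compl, Set.card_range_of_injective hp]
  calc _ = ∑ u : ι → β, ∑ v : ι → β,
        (if hammingDist (e u).1 (e v).1 + hammingDist (e u).2 (e v).2 = 1
          then F (e u).1 (e v).1 else 0) := by
          simp_rw [hammingDist_eq_add_restrict_compl hp]; rfl
    _ = ∑ w : (ι' → β) × (C → β), ∑ w' : (ι' → β) × (C → β),
        (if hammingDist w.1 w'.1 + hammingDist w.2 w'.2 = 1 then F w.1 w'.1 else 0) := by
      rw [← Equiv.sum_comp e]
      exact sum_congr rfl fun u _ => Equiv.sum_comp e (fun w' =>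
        if hammingDist (e u).1 w'.1 + hammingDist (e u).2 w'.2 = 1 then F (e u).1 w'.1 else 0)
    _ = _ := by
      simp_rw [Fintype.sum_prod_type, hcollapse]
      rw [mul_sum]
      refine sum_congr rfl fun x _ => ?_
      rw [sum_comm]
      simp only [sum_ite_eq, mem_univ, if_true, sum_const, card_univ, Fintype.card_fun, hcard,
        smul_eq_mul, mul_sum]

end HammingRestrict

lemma hammingDist_cons {β : Type*} [DecidableEq β] {p : ℕ} (b c : β) (x y : Fin p → β) :
    hammingDist (Fin.cons b x : Fin (p + 1) → β) (Fin.cons c y) =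
      (if b = c then 0 else 1) + hammingDist x y := by
  simp only [hammingDist, card_filter, Fin.sum_univ_succ, Fin.cons_zero, Fin.cons_succ]
  by_cases h : b = c <;> simp [h]

lemma sum_theta_eq {ι : Type*} {n : ℕ} (T : Finset ι) (S : ι → Finset (Fin n → Bool)) :
    ∑ j ∈ T, theta n (S j) =
      ∑ u, ∑ v, if cubeAdj u v then #{j ∈ T | u ∈ S j ∧ v ∉ S j} else 0 := by
  simp only [theta, card_filter, sum_product]
  rw [sum_comm]
  refine sum_congr rfl fun u _ => ?_
  rw [sum_comm]
  refine sum_congr rfl fun v _ => ?_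
  by_cases h : cubeAdj u v <;> simp [h]

lemma sum_fun_fin_succ {β M : Type*} [Fintype β] [AddCommMonoid M] (p : ℕ)
    (F : (Fin (p + 1) → β) → M) :
    ∑ x, F x = ∑ b, ∑ x : Fin p → β, F (Fin.cons b x) := by
  rw [← Fintype.sum_prod_type']
  exact (Fintype.sum_equiv (Fin.consEquiv fun _ => β) _ _ fun _ => rfl).symm

lemma sum_Icc_reflect {M : Type*} [AddCommMonoid M] (f : ℕ → M) {a b a' b' c : ℕ}
    (ha' : a' + b = c) (hb' : b' + a = c) :
    ∑ x ∈ Icc a b, f (c - x) = ∑ x ∈ Icc a' b', f x := by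
  apply sum_nbij' (c - ·) (c - ·) <;> intro x hx <;> simp only [mem_Icc] at * <;> omega

lemma sum_Icc_one_add_sum_Icc {M : Type*} [AddCommMonoid M] (f : ℕ → M) (N K : ℕ) :
    ∑ x ∈ Icc 1 N, f x + ∑ x ∈ Icc (N + 1) (N + K), f x = ∑ x ∈ Icc 1 (N + K), f x := by
  simp only [Icc_add_one_left_eq_Ioc]
  exact sum_Ioc_consecutive f (Nat.zero_le N) (Nat.le_add_right N K)

lemma sum_Icc_two_mul_sub_one (N : ℕ) : ∑ a ∈ Icc 1 N, (2 * a - 1) = N * N := by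
  induction N with
  | zero => simp
  | succ N ih =>
    rw [sum_Icc_succ_top (by omega), ih]
    ring_nf
    omega

lemma sum_Icc_two_mul_add_one_sub (N : ℕ) : ∑ a ∈ Icc 1 N, (2 * N + 1 - 2 * a) = N * N := by
  have hrefl := sum_Icc_reflect (fun a => 2 * a - 1) (a := 1) (b := N) (a' := 1) (b' := N)
    (c := N + 1) (by omega) (by omega)
  rw [← sum_Icc_two_mul_sub_one, ← hrefl]
  refine sum_congr rfl fun a ha => ?_
  simp only [mem_Icc] at ha
  omega

lemma sum_Icc_min_two_mul (h : ℕ) :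
    ∑ a ∈ Icc 1 (h + h), min (4 * h + 1 - 2 * a) (2 * a - 1) = 2 * (h * h) := by
  have hupper := sum_Icc_reflect (fun a => min (4 * h + 1 - 2 * a) (2 * a - 1)) (a := 1) (b := h)
    (a' := h + 1) (b' := h + h) (c := h + h + 1) (by omega) (by omega)
  rw [← sum_Icc_one_add_sum_Icc, ← hupper, ← sum_add_distrib, two_mul, ← sum_Icc_two_mul_sub_one,
    ← sum_add_distrib]
  refine sum_congr rfl fun a ha => ?_
  simp only [mem_Icc] at ha
  omega

/-- `Icc j (j + m - 1)` is the arc `F_j` of the paper. -/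
def arcCut (m a b : ℕ) : ℕ :=
  #{j ∈ Icc 1 m | a ∈ Icc j (j + m - 1) ∧ b ∉ Icc j (j + m - 1)}

lemma arcCut_self (m a : ℕ) : arcCut m a a = 0 := by simp [arcCut]

lemma filter_mem_arc (m a : ℕ) :
    {j ∈ Icc 1 m | a ∈ Icc j (j + m - 1)} = Icc (max (a + 1 - m) 1) (min a m) := by
  ext j; simp only [mem_filter, mem_Icc]; omega

lemma arcCut_add_arcCut {m a b : ℕ} (ha : a ∈ Icc 1 (2 * m)) (hb : b ∈ Icc 1 (2 * m)) :
    arcCut m a b + arcCut m b a = cycDist (2 * m) a b := by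
  have hboth : {j ∈ Icc 1 m | a ∈ Icc j (j + m - 1) ∧ b ∈ Icc j (j + m - 1)} =
      Icc (max (max (a + 1 - m) (b + 1 - m)) 1) (min (min a b) m) := by
    ext j; simp only [mem_filter, mem_Icc]; omega
  have hcut : ∀ a b,
      arcCut m a b + #{j ∈ Icc 1 m | a ∈ Icc j (j + m - 1) ∧ b ∈ Icc j (j + m - 1)} =
        #(Icc (max (a + 1 - m) 1) (min a m)) := by
    intro a b
    rw [arcCut, filter_and_not, filter_and, ← filter_mem_arc, add_comm, card_inter_add_card_sdiff]
  have h1 := hcut a b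
  have h2 := hcut b a
  simp only [and_comm (a := b ∈ _)] at h2
  rw [hboth, Nat.card_Icc, Nat.card_Icc] at h1 h2
  simp only [mem_Icc] at ha hb
  simp only [cycDist, Nat.dist]
  omega

lemma gray_cons (p : ℕ) (b : Bool) (x : Fin p → Bool) :
    gray (p + 1) (Fin.cons b x) = if b = false then gray p x else 2 ^ (p + 1) + 1 - gray p x := by
  simp [gray]

lemma gray_mem_Icc (p : ℕ) (x : Fin p → Bool) : gray p x ∈ Icc 1 (2 ^ p) := by
  induction p with
  | zero => simp [gray]
  | succ p ih =>
    have := mem_Icc.1 (ih fun i => x i.succ)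
    rw [mem_Icc, pow_succ]
    by_cases hx : x 0 = false <;> simp [gray, hx] <;> omega

lemma sum_gray {M : Type*} [AddCommMonoid M] (p : ℕ) (f : ℕ → M) :
    ∑ x : Fin p → Bool, f (gray p x) = ∑ a ∈ Icc 1 (2 ^ p), f a := by
  induction p generalizing f with
  | zero => simp [gray]
  | succ p ih =>
    have hupper : ∑ a ∈ Icc 1 (2 ^ p), f (2 ^ (p + 1) + 1 - a) =
        ∑ a ∈ Icc (2 ^ p + 1) (2 ^ p + 2 ^ p), f a := by
      rw [pow_succ, mul_two]
      generalize 2 ^ p = N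
      exact sum_Icc_reflect f (by omega) (by omega)
    rw [sum_fun_fin_succ, Fintype.sum_bool]
    simp only [gray_cons, Bool.true_eq_false, if_false, if_true]
    rw [ih, ih (fun a => f (2 ^ (p + 1) + 1 - a)), hupper, add_comm, sum_Icc_one_add_sum_Icc, pow_succ,
      mul_two]

def grayEdgeSum (p : ℕ) (d : ℕ → ℕ → ℕ) : ℕ :=
  ∑ x : Fin p → Bool, ∑ y : Fin p → Bool,
    if hammingDist x y = 1 then d (gray p x) (gray p y) else 0

lemma grayEdgeSum_congr {p : ℕ} {d d' : ℕ → ℕ → ℕ}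
    (h : ∀ a ∈ Icc 1 (2 ^ p), ∀ b ∈ Icc 1 (2 ^ p), d a b = d' a b) :
    grayEdgeSum p d = grayEdgeSum p d' := by
  unfold grayEdgeSum
  refine sum_congr rfl fun x _ => sum_congr rfl fun y _ => ?_
  rw [h _ (gray_mem_Icc p x) _ (gray_mem_Icc p y)]

lemma grayEdgeSum_swap (p : ℕ) (d : ℕ → ℕ → ℕ) :
    grayEdgeSum p (fun a b => d b a) = grayEdgeSum p d := by
  unfold grayEdgeSum
  rw [sum_comm]
  simp only [hammingDist_comm]

lemma grayEdgeSum_add (p : ℕ) (d d' : ℕ → ℕ → ℕ) :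
    grayEdgeSum p (fun a b => d a b + d' a b) = grayEdgeSum p d + grayEdgeSum p d' := by
  simp only [grayEdgeSum, ← sum_add_distrib, ite_add_ite, add_zero]

lemma grayEdgeSum_succ (p : ℕ) (d : ℕ → ℕ → ℕ) :
    grayEdgeSum (p + 1) d =
      grayEdgeSum p (fun a b => d (2 ^ (p + 1) + 1 - a) (2 ^ (p + 1) + 1 - b)) +
        grayEdgeSum p d +
        ∑ a ∈ Icc 1 (2 ^ p), (d (2 ^ (p + 1) + 1 - a) a + d a (2 ^ (p + 1) + 1 - a)) := by
  have diag : ∀ G : (Fin p → Bool) → (Fin p → Bool) → ℕ,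
      ∑ x, ∑ y, (if 1 + hammingDist x y = 1 then G x y else 0) = ∑ x, G x x := by
    intro G
    refine sum_congr rfl fun x _ => ?_
    simp only [Nat.add_eq_left, hammingDist_eq_zero, sum_ite_eq, mem_univ, if_true]
  simp only [grayEdgeSum, sum_fun_fin_succ, Fintype.sum_bool, hammingDist_cons, gray_cons]
  simp only [Bool.true_eq_false, Bool.false_eq_true, if_true, if_false, zero_add, sum_add_distrib,
    diag]
  rw [sum_gray p (fun a => d (2 ^ (p + 1) + 1 - a) a),
    sum_gray p (fun a => d a (2 ^ (p + 1) + 1 - a))]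
  ring

lemma grayEdgeSum_dist (p : ℕ) : grayEdgeSum p Nat.dist + 2 ^ p = 4 ^ p := by
  induction p with
  | zero => simp [grayEdgeSum, gray]
  | succ p ih =>
    have hrefl : grayEdgeSum p (fun a b => Nat.dist (2 ^ (p + 1) + 1 - a) (2 ^ (p + 1) + 1 - b)) =
        grayEdgeSum p Nat.dist := by
      refine grayEdgeSum_congr fun a ha b hb => ?_
      simp only [mem_Icc, pow_succ, Nat.dist] at ha hb ⊢
      omega
    have hcross : ∑ a ∈ Icc 1 (2 ^ p),
        (Nat.dist (2 ^ (p + 1) + 1 - a) a + Nat.dist a (2 ^ (p + 1) + 1 - a)) =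
          2 * (2 ^ p * 2 ^ p) := by
      rw [two_mul, ← sum_Icc_two_mul_add_one_sub, ← sum_add_distrib]
      refine sum_congr rfl fun a ha => ?_
      simp only [mem_Icc, pow_succ, Nat.dist] at ha ⊢
      omega
    have h4 : 4 ^ p = 2 ^ p * 2 ^ p := by rw [← mul_pow]; norm_num
    rw [grayEdgeSum_succ, hrefl, hcross, pow_succ, pow_succ 4, h4]
    rw [h4] at ih
    generalize 2 ^ p = N at *
    omega

lemma grayEdgeSum_cycDist (q : ℕ) (hq : 1 ≤ q) :
    grayEdgeSum (q + 1) (cycDist (2 ^ (q + 1))) + 2 ^ (q + 1) = 3 * 4 ^ q := by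
  obtain ⟨h, hh⟩ : ∃ h, 2 ^ q = h + h :=
    ⟨2 ^ (q - 1), by rw [← two_mul, ← pow_succ']; congr; omega⟩
  have hrefl : grayEdgeSum q (fun a b => cycDist (2 ^ (q + 1)) (2 ^ (q + 1) + 1 - a)
      (2 ^ (q + 1) + 1 - b)) = grayEdgeSum q Nat.dist := by
    refine grayEdgeSum_congr fun a ha b hb => ?_
    simp only [mem_Icc, pow_succ, cycDist, Nat.dist] at ha hb ⊢
    omega
  have hdist : grayEdgeSum q (cycDist (2 ^ (q + 1))) = grayEdgeSum q Nat.dist := by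
    refine grayEdgeSum_congr fun a ha b hb => ?_
    simp only [mem_Icc, pow_succ, cycDist, Nat.dist] at ha hb ⊢
    omega
  have hcross : ∑ a ∈ Icc 1 (2 ^ q), (cycDist (2 ^ (q + 1)) (2 ^ (q + 1) + 1 - a) a +
      cycDist (2 ^ (q + 1)) a (2 ^ (q + 1) + 1 - a)) = 4 * (h * h) := by
    rw [show 4 * (h * h) = 2 * (h * h) + 2 * (h * h) by ring, ← sum_Icc_min_two_mul, hh,
      ← sum_add_distrib]
    refine sum_congr rfl fun a ha => ?_
    simp only [mem_Icc, pow_succ, hh, cycDist, Nat.dist] at ha ⊢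
    omega
  have hd := grayEdgeSum_dist q
  have h4 : 4 ^ q = 2 ^ q * 2 ^ q := by rw [← mul_pow]; norm_num
  rw [grayEdgeSum_succ, hrefl, hdist, hcross, pow_succ]
  rw [h4, hh] at hd ⊢
  linarith

lemma grayEdgeSum_arcCut (p : ℕ) (hp : 2 ≤ p) :
    grayEdgeSum p (arcCut (2 ^ (p - 1))) = 3 * 2 ^ (2 * p - 3) - 2 ^ (p - 1) := by
  obtain ⟨q, rfl⟩ : ∃ q, p = q + 1 := ⟨p - 1, by omega⟩
  have hcyc : 2 * grayEdgeSum (q + 1) (arcCut (2 ^ q)) =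
      grayEdgeSum (q + 1) (cycDist (2 ^ (q + 1))) := by
    rw [two_mul]
    nth_rewrite 2 [← grayEdgeSum_swap]
    rw [← grayEdgeSum_add]
    refine grayEdgeSum_congr fun a ha b hb => ?_
    rw [pow_succ'] at ha hb ⊢
    exact arcCut_add_arcCut ha hb
  have h := grayEdgeSum_cycDist q (by omega)
  have h4 : 4 ^ q = 2 * 2 ^ (2 * q - 1) := by
    rw [← pow_succ', show 2 * q - 1 + 1 = 2 * q by omega, pow_mul]; norm_num
  rw [Nat.add_sub_cancel, show 2 * (q + 1) - 3 = 2 * q - 1 by omega]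
  rw [← hcyc, h4, pow_succ] at h
  omega

lemma blockPos_injective {k : ℕ} (n : Fin k → ℕ) (i : Fin k) : Injective (blockPos n i) :=
  fun _ _ h => Fin.ext (by simpa [blockPos] using h)

lemma grayK_mem_Icc {k : ℕ} (n : Fin k → ℕ) (v : Fin (∑ j, n j) → Bool) (l : Fin k) :
    grayK n v l ∈ Icc 1 (2 ^ n l) :=
  gray_mem_Icc _ _

theorem stmt15_general (k : ℕ) (n : Fin k → ℕ) (hn : ∀ i, 2 ≤ n i) (i : Fin k) :
    ∑ j ∈ Finset.Icc 1 (2 ^ (n i - 1)),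
        theta (∑ l, n l) (Finset.univ.filter fun v : Fin (∑ l, n l) → Bool =>
          (∀ l, l ≠ i → grayK n v l ∈ Finset.Icc 1 (2 ^ n l)) ∧
            grayK n v i ∈ Finset.Icc j (j + 2 ^ (n i - 1) - 1)) =
      2 ^ ((∑ l, n l) - n i) * (3 * 2 ^ (2 * n i - 3) - 2 ^ (n i - 1)) := by
  calc _ = ∑ u, ∑ v, if hammingDist u v = 1 then arcCut (2 ^ (n i - 1))
        (gray (n i) (u ∘ blockPos n i)) (gray (n i) (v ∘ blockPos n i)) else 0 := by
        rw [sum_theta_eq]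
        refine sum_congr rfl fun u _ => sum_congr rfl fun v _ => if_congr Iff.rfl ?_ rfl
        refine congrArg card (filter_congr fun j _ => ?_)
        simp only [mem_filter, mem_univ, true_and, grayK_mem_Icc, implies_true]
        rfl
    _ = 2 ^ ((∑ l, n l) - n i) * grayEdgeSum (n i) (arcCut (2 ^ (n i - 1))) := by
        refine (sum_hammingDist_eq_one_restrict (blockPos_injective n i)
          (fun x y => arcCut (2 ^ (n i - 1)) (gray (n i) x) (gray (n i) y))
          fun x => arcCut_self _ _).trans ?_
        simp [grayEdgeSum]
    _ = _ := by rw [grayEdgeSum_arcCut _ (hn i)]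

/-- Sum of edge boundaries of Gray-code preimages of the cuts `ℬ_{ij}` for a cycle factor. -/
theorem stmt15 (k : ℕ) (hk : 1 ≤ k) (n : Fin k → ℕ) (hn : ∀ i, 2 ≤ n i) (i : Fin k) :
    ∑ j ∈ Finset.Icc 1 (2 ^ (n i - 1)),
        theta (∑ l, n l) (Finset.univ.filter fun v : Fin (∑ l, n l) → Bool =>
          (∀ l, l ≠ i → grayK n v l ∈ Finset.Icc 1 (2 ^ n l)) ∧
            grayK n v i ∈ Finset.Icc j (j + 2 ^ (n i - 1) - 1)) =
      2 ^ ((∑ l, n l) - n i) * (3 * 2 ^ (2 * n i - 3) - 2 ^ (n i - 1)) :=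
  stmt15_general k n hn i
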